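/- Let S be a finite set with |S| = k ≥ 3 and c ≥ 0 a real number. Then β_c and β̄_c are bisubmodular functions on 3^S, the node-flowing polytope P_c equals the bisubmodular polyhedron D(β_c), and the tight node-flowing polytope P̄_c equals D(β̄_c). -/
import Mathlib


open Finset

/-- Bisubmodularity of a real-valued function on `3^S` (with `β(∅,∅) = 0`). -/
def BisubmodularR {S : Type*} [DecidableEq S] (β : Finset S → Finset S → ℝ) : Prop :=
  β ∅ ∅ = 0 ∧ ∀ Y Z Y' Z' : Finset S, Disjoint Y Z → Disjoint Y' Z' →
    β (Y ∩ Y') (Z ∩ Z') + β ((Y ∪ Y') \ (Z ∪ Z')) ((Z ∪ Z') \ (Y ∪ Y')) ≤ β Y Z + β Y' Z'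

/-- Membership in the bisubmodular polyhedron `D(β)`. -/
def InBisubPolyR {S : Type*} [Fintype S] [DecidableEq S]
    (β : Finset S → Finset S → ℝ) (z : S → ℝ) : Prop :=
  ∀ Y Z : Finset S, Disjoint Y Z →
    (∑ i ∈ Y, z i) - (∑ i ∈ Z, z i) ≤ β Y Z

/-- The node-flowing polytope `P_c`. -/
def nodeFlowing (S : Type*) [Fintype S] [DecidableEq S] (c : ℝ) : Set (S → ℝ) :=
  {z | (∀ i, 0 ≤ z i) ∧ (∑ i, z i) ≤ 2 * c ∧
    ∀ t, z t ≤ ∑ i ∈ univ.erase t, z i}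

/-- The tight node-flowing polytope `P̄_c`. -/
def tightNodeFlowing (S : Type*) [Fintype S] [DecidableEq S] (c : ℝ) : Set (S → ℝ) :=
  {z | (∀ i, 0 ≤ z i) ∧ (∑ i, z i) = 2 * c ∧
    ∀ t, z t ≤ ∑ i ∈ univ.erase t, z i}

/-- The bisubmodular function `β_c` describing `P_c`. -/
noncomputable def betaNF (S : Type*) [Fintype S] [DecidableEq S] (c : ℝ)
    (Y Z : Finset S) : ℝ :=
  if 2 ≤ Y.card then 2 * c
  else if Y.card = 1 ∧ Z.card ≤ Fintype.card S - 2 then c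
  else 0

/-- The bisubmodular function `β̄_c` describing `P̄_c`. -/
noncomputable def betaTNF (S : Type*) [Fintype S] [DecidableEq S] (c : ℝ)
    (Y Z : Finset S) : ℝ :=
  if 2 ≤ Y.card then 2 * c
  else if Y.card = 1 ∧ Z.card ≤ Fintype.card S - 2 then c
  else if Y = ∅ ∧ Z.card = Fintype.card S - 1 then -c
  else if Y = ∅ ∧ Z.card = Fintype.card S then -(2 * c)
  else 0

/-- On disjoint pairs, `β_c` equals `c` times an integer formula. -/
lemma betaNF_eq {S : Type*} [Fintype S] [DecidableEq S] (c : ℝ)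
    (hk : 3 ≤ Fintype.card S) {Y Z : Finset S} (h : Disjoint Y Z) :
    betaNF S c Y Z =
      c * ((max (min (Y.card : ℤ) 2 + min ((Fintype.card S : ℤ) - Z.card) 2 - 2) 0 : ℤ) : ℝ) := by
  have hd : Y.card + Z.card ≤ Fintype.card S := by
    rw [← Finset.card_union_of_disjoint h]
    exact (Finset.card_le_univ _).trans_eq Finset.card_univ
  unfold betaNF
  split_ifs with h1 h2
  · have hv : (max (min (Y.card : ℤ) 2 + min ((Fintype.card S : ℤ) - Z.card) 2 - 2) 0 : ℤ) = 2 := by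
      omega
    rw [hv]; push_cast; ring
  · have hv : (max (min (Y.card : ℤ) 2 + min ((Fintype.card S : ℤ) - Z.card) 2 - 2) 0 : ℤ) = 1 := by
      omega
    rw [hv]; push_cast; ring
  · have hv : (max (min (Y.card : ℤ) 2 + min ((Fintype.card S : ℤ) - Z.card) 2 - 2) 0 : ℤ) = 0 := by
      omega
    rw [hv]; push_cast; ring

/-- On disjoint pairs, `β̄_c` equals `c` times an integer formula. -/
lemma betaTNF_eq {S : Type*} [Fintype S] [DecidableEq S] (c : ℝ)
    (hk : 3 ≤ Fintype.card S) {Y Z : Finset S} (h : Disjoint Y Z) :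
    betaTNF S c Y Z =
      c * ((min (Y.card : ℤ) 2 + min ((Fintype.card S : ℤ) - Z.card) 2 - 2 : ℤ) : ℝ) := by
  have hd : Y.card + Z.card ≤ Fintype.card S := by
    rw [← Finset.card_union_of_disjoint h]
    exact (Finset.card_le_univ _).trans_eq Finset.card_univ
  unfold betaTNF
  simp only [← Finset.card_eq_zero]
  split_ifs with h1 h2 h3 h4
  · have hv : (min (Y.card : ℤ) 2 + min ((Fintype.card S : ℤ) - Z.card) 2 - 2 : ℤ) = 2 := by omega
    rw [hv]; push_cast; ring
  · have hv : (min (Y.card : ℤ) 2 + min ((Fintype.card S : ℤ) - Z.card) 2 - 2 : ℤ) = 1 := by omega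
    rw [hv]; push_cast; ring
  · have hv : (min (Y.card : ℤ) 2 + min ((Fintype.card S : ℤ) - Z.card) 2 - 2 : ℤ) = -1 := by omega
    rw [hv]; push_cast; ring
  · have hv : (min (Y.card : ℤ) 2 + min ((Fintype.card S : ℤ) - Z.card) 2 - 2 : ℤ) = -2 := by omega
    rw [hv]; push_cast; ring
  · have hv : (min (Y.card : ℤ) 2 + min ((Fintype.card S : ℤ) - Z.card) 2 - 2 : ℤ) = 0 := by omega
    rw [hv]; push_cast; ring

set_option maxHeartbeats 2000000 in
/-- The purely arithmetic core of bisubmodularity. -/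
lemma beta_arith (k a1 a2 b1 b2 m1 m2 j1 j2 p q : ℕ) (hk : 3 ≤ k)
    (f1 : m1 + p ≤ a1) (f2 : m1 + q ≤ b1) (f3 : m2 + q ≤ a2) (f4 : m2 + p ≤ b2)
    (f5 : j1 + m1 + p + q = a1 + b1) (f6 : j2 + m2 + p + q = a2 + b2)
    (f7 : j1 + j2 + p + q ≤ k) (f8 : a1 + a2 ≤ k) (f9 : b1 + b2 ≤ k) :
    (max (min (m1 : ℤ) 2 + min ((k : ℤ) - m2) 2 - 2) 0
        + max (min (j1 : ℤ) 2 + min ((k : ℤ) - j2) 2 - 2) 0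
      ≤ max (min (a1 : ℤ) 2 + min ((k : ℤ) - a2) 2 - 2) 0
        + max (min (b1 : ℤ) 2 + min ((k : ℤ) - b2) 2 - 2) 0)
    ∧ ((min (m1 : ℤ) 2 + min ((k : ℤ) - m2) 2 - 2)
        + (min (j1 : ℤ) 2 + min ((k : ℤ) - j2) 2 - 2)
      ≤ (min (a1 : ℤ) 2 + min ((k : ℤ) - a2) 2 - 2)
        + (min (b1 : ℤ) 2 + min ((k : ℤ) - b2) 2 - 2)) := by
  constructor <;> omega

/-- The cardinality facts relating meet and join pairs. -/
lemma card_facts {S : Type*} [Fintype S] [DecidableEq S] {Y Z Y' Z' : Finset S}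
    (hYZ : Disjoint Y Z) (hY'Z' : Disjoint Y' Z') :
    ∃ p q : ℕ,
      (Y ∩ Y').card + p ≤ Y.card ∧ (Y ∩ Y').card + q ≤ Y'.card ∧
      (Z ∩ Z').card + q ≤ Z.card ∧ (Z ∩ Z').card + p ≤ Z'.card ∧
      ((Y ∪ Y') \ (Z ∪ Z')).card + (Y ∩ Y').card + p + q = Y.card + Y'.card ∧
      ((Z ∪ Z') \ (Y ∪ Y')).card + (Z ∩ Z').card + p + q = Z.card + Z'.card ∧
      ((Y ∪ Y') \ (Z ∪ Z')).card + ((Z ∪ Z') \ (Y ∪ Y')).card + p + q ≤ Fintype.card S ∧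
      Y.card + Z.card ≤ Fintype.card S ∧ Y'.card + Z'.card ≤ Fintype.card S := by
  have hY := Finset.disjoint_left.mp hYZ
  have hY' := Finset.disjoint_left.mp hY'Z'
  refine ⟨(Y ∩ Z').card, (Y' ∩ Z).card, ?_, ?_, ?_, ?_, ?_, ?_, ?_, ?_, ?_⟩
  · have hd : Disjoint (Y ∩ Y') (Y ∩ Z') :=
      hY'Z'.mono inter_subset_right inter_subset_right
    calc (Y ∩ Y').card + (Y ∩ Z').card = ((Y ∩ Y') ∪ (Y ∩ Z')).card :=
          (Finset.card_union_of_disjoint hd).symm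
      _ ≤ Y.card := Finset.card_le_card (union_subset inter_subset_left inter_subset_left)
  · have hd : Disjoint (Y ∩ Y') (Y' ∩ Z) :=
      hYZ.mono inter_subset_left inter_subset_right
    calc (Y ∩ Y').card + (Y' ∩ Z).card = ((Y ∩ Y') ∪ (Y' ∩ Z)).card :=
          (Finset.card_union_of_disjoint hd).symm
      _ ≤ Y'.card := Finset.card_le_card (union_subset inter_subset_right inter_subset_left)
  · have hd : Disjoint (Z ∩ Z') (Y' ∩ Z) :=
      hY'Z'.symm.mono inter_subset_right inter_subset_left
    calc (Z ∩ Z').card + (Y' ∩ Z).card = ((Z ∩ Z') ∪ (Y' ∩ Z)).card :=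
          (Finset.card_union_of_disjoint hd).symm
      _ ≤ Z.card := Finset.card_le_card (union_subset inter_subset_left inter_subset_right)
  · have hd : Disjoint (Z ∩ Z') (Y ∩ Z') :=
      hYZ.symm.mono inter_subset_left inter_subset_left
    calc (Z ∩ Z').card + (Y ∩ Z').card = ((Z ∩ Z') ∪ (Y ∩ Z')).card :=
          (Finset.card_union_of_disjoint hd).symm
      _ ≤ Z'.card := Finset.card_le_card (union_subset inter_subset_right inter_subset_right)
  · have hI : (Y ∪ Y') ∩ (Z ∪ Z') = (Y ∩ Z') ∪ (Y' ∩ Z) := by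
      ext a
      simp only [Finset.mem_inter, Finset.mem_union]
      constructor
      · rintro ⟨hy | hy, hz | hz⟩
        · exact absurd hz (hY hy)
        · exact Or.inl ⟨hy, hz⟩
        · exact Or.inr ⟨hy, hz⟩
        · exact absurd hz (hY' hy)
      · rintro (⟨h1, h2⟩ | ⟨h1, h2⟩)
        · exact ⟨Or.inl h1, Or.inr h2⟩
        · exact ⟨Or.inr h1, Or.inl h2⟩
    have hdpq : Disjoint (Y ∩ Z') (Y' ∩ Z) := by
      rw [Finset.disjoint_left]
      intro a ha hb
      exact hY (Finset.mem_inter.mp ha).1 (Finset.mem_inter.mp hb).2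
    have hIc : ((Y ∪ Y') ∩ (Z ∪ Z')).card = (Y ∩ Z').card + (Y' ∩ Z).card := by
      rw [hI, Finset.card_union_of_disjoint hdpq]
    have h1 := Finset.card_sdiff_add_card_inter (Y ∪ Y') (Z ∪ Z')
    have h2 := Finset.card_union_add_card_inter Y Y'
    omega
  · have hI : (Z ∪ Z') ∩ (Y ∪ Y') = (Y ∩ Z') ∪ (Y' ∩ Z) := by
      ext a
      simp only [Finset.mem_inter, Finset.mem_union]
      constructor
      · rintro ⟨hz | hz, hy | hy⟩
        · exact absurd hz (hY hy)
        · exact Or.inr ⟨hy, hz⟩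
        · exact Or.inl ⟨hy, hz⟩
        · exact absurd hz (hY' hy)
      · rintro (⟨h1, h2⟩ | ⟨h1, h2⟩)
        · exact ⟨Or.inr h2, Or.inl h1⟩
        · exact ⟨Or.inl h2, Or.inr h1⟩
    have hdpq : Disjoint (Y ∩ Z') (Y' ∩ Z) := by
      rw [Finset.disjoint_left]
      intro a ha hb
      exact hY (Finset.mem_inter.mp ha).1 (Finset.mem_inter.mp hb).2
    have hIc : ((Z ∪ Z') ∩ (Y ∪ Y')).card = (Y ∩ Z').card + (Y' ∩ Z).card := by
      rw [hI, Finset.card_union_of_disjoint hdpq]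
    have h1 := Finset.card_sdiff_add_card_inter (Z ∪ Z') (Y ∪ Y')
    have h2 := Finset.card_union_add_card_inter Z Z'
    omega
  · have hI : (Z ∪ Z') ∩ (Y ∪ Y') = (Y ∩ Z') ∪ (Y' ∩ Z) := by
      ext a
      simp only [Finset.mem_inter, Finset.mem_union]
      constructor
      · rintro ⟨hz | hz, hy | hy⟩
        · exact absurd hz (hY hy)
        · exact Or.inr ⟨hy, hz⟩
        · exact Or.inl ⟨hy, hz⟩
        · exact absurd hz (hY' hy)
      · rintro (⟨h1, h2⟩ | ⟨h1, h2⟩)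
        · exact ⟨Or.inr h2, Or.inl h1⟩
        · exact ⟨Or.inl h2, Or.inr h1⟩
    have hdpq : Disjoint (Y ∩ Z') (Y' ∩ Z) := by
      rw [Finset.disjoint_left]
      intro a ha hb
      exact hY (Finset.mem_inter.mp ha).1 (Finset.mem_inter.mp hb).2
    have hIc : ((Z ∪ Z') ∩ (Y ∪ Y')).card = (Y ∩ Z').card + (Y' ∩ Z).card := by
      rw [hI, Finset.card_union_of_disjoint hdpq]
    have h1 := Finset.card_sdiff_add_card (Y ∪ Y') (Z ∪ Z')
    have h2 := Finset.card_sdiff_add_card_inter (Z ∪ Z') (Y ∪ Y')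
    have h3 : ((Y ∪ Y') ∪ (Z ∪ Z')).card ≤ Fintype.card S :=
      (Finset.card_le_univ _).trans_eq Finset.card_univ
    omega
  · rw [← Finset.card_union_of_disjoint hYZ]
    exact (Finset.card_le_univ _).trans_eq Finset.card_univ
  · rw [← Finset.card_union_of_disjoint hY'Z']
    exact (Finset.card_le_univ _).trans_eq Finset.card_univ

/-- **The node-flowing polytopes are bisubmodular polyhedra:**
`β_c` and `β̄_c` are bisubmodular, `P_c = D(β_c)` and `P̄_c = D(β̄_c)`. -/
theorem nodeFlowing_bisubmodular (S : Type*) [Fintype S] [DecidableEq S]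
    (hk : 3 ≤ Fintype.card S) (c : ℝ) (hc : 0 ≤ c) :
    BisubmodularR (betaNF S c) ∧ BisubmodularR (betaTNF S c) ∧
      nodeFlowing S c = {z : S → ℝ | InBisubPolyR (betaNF S c) z} ∧
      tightNodeFlowing S c = {z : S → ℝ | InBisubPolyR (betaTNF S c) z} := by
  have hzero : betaNF S c ∅ ∅ = 0 := by
    simp [betaNF]
  have hzeroT : betaTNF S c ∅ ∅ = 0 := by
    unfold betaTNF
    rw [if_neg (by simp), if_neg (by simp), if_neg (by simp; omega), if_neg (by simp; omega)]
  refine ⟨⟨hzero, ?_⟩, ⟨hzeroT, ?_⟩, ?_, ?_⟩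
  · -- betaNF bisubmodular
    intro Y Z Y' Z' hYZ hY'Z'
    have hmd : Disjoint (Y ∩ Y') (Z ∩ Z') := hYZ.mono inter_subset_left inter_subset_left
    have hjd : Disjoint ((Y ∪ Y') \ (Z ∪ Z')) ((Z ∪ Z') \ (Y ∪ Y')) := disjoint_sdiff_sdiff
    rw [betaNF_eq c hk hmd, betaNF_eq c hk hjd, betaNF_eq c hk hYZ, betaNF_eq c hk hY'Z']
    obtain ⟨p, q, f1, f2, f3, f4, f5, f6, f7, f8, f9⟩ := card_facts hYZ hY'Z'
    have key := (beta_arith (Fintype.card S) Y.card Z.card Y'.card Z'.card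
      (Y ∩ Y').card (Z ∩ Z').card ((Y ∪ Y') \ (Z ∪ Z')).card ((Z ∪ Z') \ (Y ∪ Y')).card
      p q hk f1 f2 f3 f4 f5 f6 f7 f8 f9).1
    have key' : ((max (min ((Y ∩ Y').card : ℤ) 2 + min ((Fintype.card S : ℤ) - (Z ∩ Z').card) 2 - 2) 0 : ℤ) : ℝ)
        + ((max (min ((((Y ∪ Y') \ (Z ∪ Z')).card : ℕ) : ℤ) 2 + min ((Fintype.card S : ℤ) - (((Z ∪ Z') \ (Y ∪ Y')).card : ℕ)) 2 - 2) 0 : ℤ) : ℝ)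
        ≤ ((max (min (Y.card : ℤ) 2 + min ((Fintype.card S : ℤ) - Z.card) 2 - 2) 0 : ℤ) : ℝ)
        + ((max (min (Y'.card : ℤ) 2 + min ((Fintype.card S : ℤ) - Z'.card) 2 - 2) 0 : ℤ) : ℝ) := by
      exact_mod_cast key
    nlinarith [key', hc]
  · -- betaTNF bisubmodular
    intro Y Z Y' Z' hYZ hY'Z'
    have hmd : Disjoint (Y ∩ Y') (Z ∩ Z') := hYZ.mono inter_subset_left inter_subset_left
    have hjd : Disjoint ((Y ∪ Y') \ (Z ∪ Z')) ((Z ∪ Z') \ (Y ∪ Y')) := disjoint_sdiff_sdiff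
    rw [betaTNF_eq c hk hmd, betaTNF_eq c hk hjd, betaTNF_eq c hk hYZ, betaTNF_eq c hk hY'Z']
    obtain ⟨p, q, f1, f2, f3, f4, f5, f6, f7, f8, f9⟩ := card_facts hYZ hY'Z'
    have key := (beta_arith (Fintype.card S) Y.card Z.card Y'.card Z'.card
      (Y ∩ Y').card (Z ∩ Z').card ((Y ∪ Y') \ (Z ∪ Z')).card ((Z ∪ Z') \ (Y ∪ Y')).card
      p q hk f1 f2 f3 f4 f5 f6 f7 f8 f9).2
    have key' : ((min ((Y ∩ Y').card : ℤ) 2 + min ((Fintype.card S : ℤ) - (Z ∩ Z').card) 2 - 2 : ℤ) : ℝ)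
        + ((min ((((Y ∪ Y') \ (Z ∪ Z')).card : ℕ) : ℤ) 2 + min ((Fintype.card S : ℤ) - (((Z ∪ Z') \ (Y ∪ Y')).card : ℕ)) 2 - 2 : ℤ) : ℝ)
        ≤ ((min (Y.card : ℤ) 2 + min ((Fintype.card S : ℤ) - Z.card) 2 - 2 : ℤ) : ℝ)
        + ((min (Y'.card : ℤ) 2 + min ((Fintype.card S : ℤ) - Z'.card) 2 - 2 : ℤ) : ℝ) := by
      exact_mod_cast key
    nlinarith [key', hc]
  · -- nodeFlowing = D(betaNF)
    ext z
    simp only [nodeFlowing, Set.mem_setOf_eq, InBisubPolyR]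
    constructor
    · rintro ⟨h0, hs, ht⟩ Y Z hYZ
      have hZ0 : (0 : ℝ) ≤ ∑ i ∈ Z, z i := Finset.sum_nonneg fun i _ => h0 i
      have hYle : ∑ i ∈ Y, z i ≤ ∑ i, z i :=
        Finset.sum_le_sum_of_subset_of_nonneg (Finset.subset_univ Y) fun i _ _ => h0 i
      unfold betaNF
      split_ifs with h1 h2
      · linarith
      · obtain ⟨t, rfl⟩ := Finset.card_eq_one.mp h2.1
        rw [Finset.sum_singleton]
        have he := Finset.sum_erase_add univ z (Finset.mem_univ t)
        have := ht t
        linarith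
      · rcases Nat.lt_or_ge Y.card 1 with hY0 | hY1
        · have : Y = ∅ := Finset.card_eq_zero.mp (by omega)
          subst this
          simp only [Finset.sum_empty]
          linarith
        · have hYc : Y.card = 1 := by omega
          obtain ⟨t, rfl⟩ := Finset.card_eq_one.mp hYc
          have hZe : Z ⊆ univ.erase t := by
            rw [Finset.subset_erase]
            exact ⟨Finset.subset_univ Z, Finset.disjoint_left.mp hYZ (Finset.mem_singleton_self t)⟩
          have hZcard : Fintype.card S - 1 ≤ Z.card := by
            push_neg at h2
            have := h2 hYc
            omega
          have hZeq : Z = univ.erase t := by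
            apply Finset.eq_of_subset_of_card_le hZe
            rw [Finset.card_erase_of_mem (Finset.mem_univ t), Finset.card_univ]
            exact hZcard
          rw [Finset.sum_singleton, hZeq]
          have := ht t
          linarith
    · intro h
      have h0 : ∀ i, 0 ≤ z i := by
        intro i
        have := h ∅ {i} (Finset.disjoint_empty_left _)
        simp only [Finset.sum_empty, Finset.sum_singleton, zero_sub] at this
        have hb : betaNF S c ∅ {i} = 0 := by
          unfold betaNF
          rw [if_neg (by simp), if_neg (by simp)]
        rw [hb] at this
        linarith
      refine ⟨h0, ?_, ?_⟩
      · have := h univ ∅ (Finset.disjoint_empty_right _)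
        simp only [Finset.sum_empty, sub_zero] at this
        have hb : betaNF S c univ ∅ = 2 * c := by
          unfold betaNF
          rw [if_pos (by rw [Finset.card_univ]; omega)]
        rw [hb] at this
        exact this
      · intro t
        have hd : Disjoint {t} (univ.erase t) :=
          Finset.disjoint_singleton_left.mpr (Finset.notMem_erase t univ)
        have := h {t} (univ.erase t) hd
        simp only [Finset.sum_singleton] at this
        have hb : betaNF S c {t} (univ.erase t) = 0 := by
          unfold betaNF
          rw [if_neg (by simp), if_neg ?_]
          rw [Finset.card_erase_of_mem (Finset.mem_univ t), Finset.card_univ]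
          rintro ⟨-, hh⟩
          omega
        rw [hb] at this
        linarith
  · -- tightNodeFlowing = D(betaTNF)
    ext z
    simp only [tightNodeFlowing, Set.mem_setOf_eq, InBisubPolyR]
    constructor
    · rintro ⟨h0, hs, ht⟩ Y Z hYZ
      have hZ0 : (0 : ℝ) ≤ ∑ i ∈ Z, z i := Finset.sum_nonneg fun i _ => h0 i
      have hYle : ∑ i ∈ Y, z i ≤ ∑ i, z i :=
        Finset.sum_le_sum_of_subset_of_nonneg (Finset.subset_univ Y) fun i _ _ => h0 i
      unfold betaTNF
      split_ifs with h1 h2 h3 h4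
      · linarith
      · obtain ⟨t, rfl⟩ := Finset.card_eq_one.mp h2.1
        rw [Finset.sum_singleton]
        have he := Finset.sum_erase_add univ z (Finset.mem_univ t)
        have := ht t
        linarith
      · obtain ⟨hY, hZc⟩ := h3
        subst hY
        have h1Z : (univ \ Z).card = 1 := by
          rw [Finset.card_sdiff_of_subset (Finset.subset_univ Z), Finset.card_univ]
          omega
        obtain ⟨t, htt⟩ := Finset.card_eq_one.mp h1Z
        have hZeq : Z = univ.erase t := by
          rw [Finset.erase_eq, ← htt, Finset.sdiff_sdiff_eq_self (Finset.subset_univ Z)]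
        rw [hZeq]
        simp only [Finset.sum_empty, zero_sub]
        have he := Finset.sum_erase_add univ z (Finset.mem_univ t)
        have := ht t
        linarith
      · obtain ⟨hY, hZc⟩ := h4
        subst hY
        have hZeq : Z = univ := (Finset.card_eq_iff_eq_univ Z).mp hZc
        rw [hZeq]
        simp only [Finset.sum_empty, zero_sub]
        linarith
      · rcases Nat.lt_or_ge Y.card 1 with hY0 | hY1
        · have : Y = ∅ := Finset.card_eq_zero.mp (by omega)
          subst this
          simp only [Finset.sum_empty]
          linarith
        · have hYc : Y.card = 1 := by omega
          obtain ⟨t, rfl⟩ := Finset.card_eq_one.mp hYc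
          have hZe : Z ⊆ univ.erase t := by
            rw [Finset.subset_erase]
            exact ⟨Finset.subset_univ Z, Finset.disjoint_left.mp hYZ (Finset.mem_singleton_self t)⟩
          have hZcard : Fintype.card S - 1 ≤ Z.card := by
            push_neg at h2
            have := h2 hYc
            omega
          have hZeq : Z = univ.erase t := by
            apply Finset.eq_of_subset_of_card_le hZe
            rw [Finset.card_erase_of_mem (Finset.mem_univ t), Finset.card_univ]
            exact hZcard
          rw [Finset.sum_singleton, hZeq]
          have := ht t
          linarith
    · intro h
      have h0 : ∀ i, 0 ≤ z i := by
        intro i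
        have := h ∅ {i} (Finset.disjoint_empty_left _)
        simp only [Finset.sum_empty, Finset.sum_singleton, zero_sub] at this
        have hb : betaTNF S c ∅ {i} = 0 := by
          unfold betaTNF
          rw [if_neg (by simp), if_neg (by simp), if_neg ?_, if_neg ?_]
          · simp only [Finset.card_singleton]
            rintro ⟨-, hh⟩
            omega
          · simp only [Finset.card_singleton]
            rintro ⟨-, hh⟩
            omega
        rw [hb] at this
        linarith
      have hsum : (∑ i, z i) = 2 * c := by
        have hle := h univ ∅ (Finset.disjoint_empty_right _)
        simp only [Finset.sum_empty, sub_zero] at hle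
        have hb : betaTNF S c univ ∅ = 2 * c := by
          unfold betaTNF
          rw [if_pos (by rw [Finset.card_univ]; omega)]
        rw [hb] at hle
        have hge := h ∅ univ (Finset.disjoint_empty_left _)
        simp only [Finset.sum_empty, zero_sub] at hge
        have hb2 : betaTNF S c ∅ univ = -(2 * c) := by
          unfold betaTNF
          rw [if_neg (by simp), if_neg (by simp), if_neg ?_, if_pos ⟨rfl, Finset.card_univ⟩]
          rw [Finset.card_univ]
          rintro ⟨-, hh⟩
          omega
        rw [hb2] at hge
        linarith
      refine ⟨h0, hsum, ?_⟩
      · intro t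
        have hd : Disjoint {t} (univ.erase t) :=
          Finset.disjoint_singleton_left.mpr (Finset.notMem_erase t univ)
        have := h {t} (univ.erase t) hd
        simp only [Finset.sum_singleton] at this
        have hb : betaTNF S c {t} (univ.erase t) = 0 := by
          unfold betaTNF
          rw [if_neg (by simp), if_neg ?_, if_neg (by simp), if_neg (by simp)]
          rw [Finset.card_erase_of_mem (Finset.mem_univ t), Finset.card_univ]
          rintro ⟨-, hh⟩
          omega
        rw [hb] at this
        linarith
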